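/- arXiv:2311.11063 — 4 statements merged into one kernel-verified Lean document; each statement's English description precedes it below -/
import Mathlib

section
/- With the setup of a balanced cut (P_A, V_cut, P_B) of G and P ∈ {P_A, P_B}, the shortcut-enhanced subgraph G⟨P⟩ — obtained from G[P] by adding, for every pair of border vertices b_i, b_j of P, an edge of weight d_G(b_i, b_j) — is distance-preserving: for all x, y ∈ P, the distance between x and y in G⟨P⟩ equals d_G(x, y). -/
/-- The weight of a walk in a weighted graph: the sum of the weights of its edges. -/
def walkWeight {V : Type*} {G : SimpleGraph V} (wt : V → V → ℝ) {u v : V}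
    (p : G.Walk u v) : ℝ :=
  (p.darts.map (fun d => wt d.toProd.1 d.toProd.2)).sum

/-!
A shortcut has exactly the weight of a `G`-walk between its ends, so every walk of `G⟨P⟩`
unfolds into a `G`-walk of no larger weight. Conversely, a `G`-walk between vertices of `P`
leaves `P` only through `V_cut`, so each of its excursions out of `P` starts and ends at
border vertices and can be replaced by the shortcut joining them.
-/

open SimpleGraph

section WalkWeight

variable {V : Type*} {G G' : SimpleGraph V} {wt wt' d : V → V → ℝ}

@[simp]
theorem walkWeight_nil {u : V} : walkWeight wt (Walk.nil : G.Walk u u) = 0 := by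
  simp [walkWeight]

@[simp]
theorem walkWeight_cons {u v w : V} (h : G.Adj u v) (p : G.Walk v w) :
    walkWeight wt (Walk.cons h p) = wt u v + walkWeight wt p := by
  simp [walkWeight]

@[simp]
theorem walkWeight_append {u v w : V} (p : G.Walk u v) (q : G.Walk v w) :
    walkWeight wt (p.append q) = walkWeight wt p + walkWeight wt q := by
  simp [walkWeight, Walk.darts_append]

theorem walkWeight_nonneg (hwt : ∀ u v, G.Adj u v → 0 ≤ wt u v) {u v : V} (p : G.Walk u v) :
    0 ≤ walkWeight wt p := by
  induction p with
  | nil => simp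
  | cons h _ ih => simpa using add_nonneg (hwt _ _ h) ih

theorem exists_walk_walkWeight_le_of_forall_adj
    (hadj : ∀ u v, G'.Adj u v → ∃ p : G.Walk u v, walkWeight wt p ≤ wt' u v)
    {u v : V} (q : G'.Walk u v) : ∃ p : G.Walk u v, walkWeight wt p ≤ walkWeight wt' q := by
  induction q with
  | nil => exact ⟨Walk.nil, by simp⟩
  | cons h _ ih =>
    obtain ⟨p₁, hp₁⟩ := hadj _ _ h
    obtain ⟨p₂, hp₂⟩ := ih
    exact ⟨p₁.append p₂, by simp only [walkWeight_append, walkWeight_cons]; linarith⟩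

section Distance

variable (hd : ∀ x y, IsLeast {r | ∃ p : G.Walk x y, walkWeight wt p = r} (d x y))
include hd

theorem walkDist_le_walkWeight {u v : V} (p : G.Walk u v) : d u v ≤ walkWeight wt p :=
  (hd u v).2 ⟨p, rfl⟩

theorem exists_walk_walkWeight_eq_walkDist (u v : V) :
    ∃ p : G.Walk u v, walkWeight wt p = d u v :=
  (hd u v).1

theorem walkDist_nonneg (hwt : ∀ u v, G.Adj u v → 0 ≤ wt u v) (u v : V) : 0 ≤ d u v := by
  obtain ⟨p, hp⟩ := exists_walk_walkWeight_eq_walkDist hd u v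
  exact hp ▸ walkWeight_nonneg hwt p

theorem walkDist_le_weight_add_walkDist {u v w : V} (h : G.Adj u v) :
    d u w ≤ wt u v + d v w := by
  obtain ⟨p, hp⟩ := exists_walk_walkWeight_eq_walkDist hd v w
  simpa [hp] using walkDist_le_walkWeight hd (Walk.cons h p)

theorem walkDist_le_weight {u v : V} (h : G.Adj u v) : d u v ≤ wt u v := by
  simpa using walkDist_le_walkWeight hd (Walk.cons h Walk.nil)

variable {P B : Set V} (hwt : ∀ u v, G.Adj u v → 0 ≤ wt u v)
  (hborder : ∀ u v, u ∈ P → v ∉ P → G.Adj u v → u ∈ B)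
  (hadjP : ∀ u v, u ∈ P → v ∈ P → G.Adj u v → G'.Adj u v ∧ wt' u v ≤ wt u v)
  (hadjB : ∀ u v, u ∈ B → v ∈ B → u ≠ v → G'.Adj u v ∧ wt' u v ≤ d u v)
include hwt hborder hadjP hadjB

/-- Outside `P` the walk is in an excursion, and `b` is the border vertex where it re-enters `P`;
once the start of the excursion, also a border vertex, is reached, the shortcut to `b`
replaces it. -/
theorem exists_walk_walkWeight_le_of_mem {u v : V} (p : G.Walk u v) (hv : v ∈ P) :
    (u ∈ P → ∃ q : G'.Walk u v, walkWeight wt' q ≤ walkWeight wt p) ∧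
    (u ∉ P → ∃ b ∈ B, ∃ q : G'.Walk b v, d u b + walkWeight wt' q ≤ walkWeight wt p) := by
  induction p with
  | nil => exact ⟨fun _ => ⟨Walk.nil, by simp⟩, fun hu => absurd hv hu⟩
  | @cons a c _ h p ih =>
    obtain ⟨ihP, ihOut⟩ := ih hv
    simp only [walkWeight_cons]
    by_cases hc : c ∈ P
    · obtain ⟨q, hq⟩ := ihP hc
      refine ⟨fun ha => ?_, fun ha => ⟨c, hborder c a hc ha h.symm, q, ?_⟩⟩
      · obtain ⟨hadj, hle⟩ := hadjP a c ha hc h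
        exact ⟨Walk.cons hadj q, by simp only [walkWeight_cons]; linarith⟩
      · linarith [walkDist_le_weight hd h]
    · obtain ⟨b, hb, q, hq⟩ := ihOut hc
      have htri := walkDist_le_weight_add_walkDist hd h (w := b)
      refine ⟨fun ha => ?_, fun _ => ⟨b, hb, q, by linarith⟩⟩
      have haB := hborder a c ha hc h
      by_cases hab : a = b
      · subst hab
        exact ⟨q, by linarith [hwt a c h, walkDist_nonneg hd hwt c a]⟩
      · obtain ⟨hadj, hle⟩ := hadjB a b haB hb hab
        exact ⟨Walk.cons hadj q, by simp only [walkWeight_cons]; linarith⟩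

end Distance

theorem mem_cut_of_adj_of_notMem {PA PB Vcut P : Set V}
    (hcover : ∀ v, v ∈ PA ∨ v ∈ PB ∨ v ∈ Vcut) (hsep : ∀ a ∈ PA, ∀ b ∈ PB, ¬ G.Adj a b)
    (hP : P = PA ∨ P = PB) {u v : V} (hu : u ∈ P) (hv : v ∉ P) (h : G.Adj u v) : v ∈ Vcut := by
  rcases hcover v with hvA | hvB | hvcut
  · rcases hP with rfl | rfl
    exacts [absurd hvA hv, absurd h.symm (hsep v hvA u hu)]
  · rcases hP with rfl | rfl
    exacts [absurd h (hsep u hu v hvB), absurd hvB hv]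
  · exact hvcut

end WalkWeight

theorem shortcut_enhanced_distance_preserving_general {V : Type*}
    (G G' : SimpleGraph V) (wt wt' : V → V → ℝ)
    (hwpos : ∀ u v, G.Adj u v → 0 < wt u v)
    (d dP' : V → V → ℝ)
    (PA PB Vcut : Set V)
    (hpart : ∀ v : V, (v ∈ PA ∧ v ∉ PB ∧ v ∉ Vcut) ∨ (v ∈ PB ∧ v ∉ PA ∧ v ∉ Vcut) ∨
      (v ∈ Vcut ∧ v ∉ PA ∧ v ∉ PB))
    (hsep : ∀ a ∈ PA, ∀ b ∈ PB, ¬ G.Adj a b)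
    (P : Set V) (hP : P = PA ∨ P = PB)
    (B : Set V) (hB : B = {v : V | v ∈ P ∧ ∃ c ∈ Vcut, G.Adj v c})
    (hd : ∀ x y : V, IsLeast {r : ℝ | ∃ p : G.Walk x y, walkWeight wt p = r} (d x y))
    -- the enhanced graph: original edges within `P` plus shortcuts between border vertices
    (hG' : ∀ u v : V, G'.Adj u v ↔ u ≠ v ∧
      ((G.Adj u v ∧ u ∈ P ∧ v ∈ P) ∨ (u ∈ B ∧ v ∈ B)))
    -- shortcut edges carry the `G`-distance as weight; other edges keep their weight
    (hwt'B : ∀ u v : V, u ∈ B → v ∈ B → wt' u v = d u v)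
    (hwt'E : ∀ u v : V, ¬ (u ∈ B ∧ v ∈ B) → wt' u v = wt u v)
    (hdP' : ∀ x ∈ P, ∀ y ∈ P, IsLeast
      {r : ℝ | ∃ p : G'.Walk x y, walkWeight wt' p = r} (dP' x y)) :
    ∀ x ∈ P, ∀ y ∈ P, dP' x y = d x y := by
  have hunfold : ∀ u v, G'.Adj u v → ∃ p : G.Walk u v, walkWeight wt p ≤ wt' u v := by
    intro u v h
    by_cases huv : u ∈ B ∧ v ∈ B
    · obtain ⟨p, hp⟩ := exists_walk_walkWeight_eq_walkDist hd u v
      exact ⟨p, (hp.trans (hwt'B u v huv.1 huv.2).symm).le⟩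
    · have hadj := (((hG' u v).1 h).2.resolve_right huv).1
      exact ⟨Walk.cons hadj Walk.nil, by simp [hwt'E u v huv]⟩
  have hborder : ∀ u v, u ∈ P → v ∉ P → G.Adj u v → u ∈ B := fun u v hu hv h =>
    hB ▸ ⟨hu, v, mem_cut_of_adj_of_notMem
      (fun v => (hpart v).imp And.left (Or.imp And.left And.left)) hsep hP hu hv h, h⟩
  have hadjP : ∀ u v, u ∈ P → v ∈ P → G.Adj u v → G'.Adj u v ∧ wt' u v ≤ wt u v := by
    intro u v hu hv h
    refine ⟨(hG' u v).2 ⟨h.ne, .inl ⟨h, hu, hv⟩⟩, ?_⟩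
    by_cases huv : u ∈ B ∧ v ∈ B
    · exact (hwt'B u v huv.1 huv.2).trans_le (walkDist_le_weight hd h)
    · exact (hwt'E u v huv).le
  have hadjB : ∀ u v, u ∈ B → v ∈ B → u ≠ v → G'.Adj u v ∧ wt' u v ≤ d u v :=
    fun u v hu hv huv => ⟨(hG' u v).2 ⟨huv, .inr ⟨hu, hv⟩⟩, (hwt'B u v hu hv).le⟩
  intro x hx y hy
  apply le_antisymm
  · obtain ⟨p, hp⟩ := exists_walk_walkWeight_eq_walkDist hd x y
    obtain ⟨q, hq⟩ := (exists_walk_walkWeight_le_of_mem hd (fun u v h => (hwpos u v h).le)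
      hborder hadjP hadjB p hy).1 hx
    exact ((hdP' x hx y hy).2 ⟨q, rfl⟩).trans (hp ▸ hq)
  · obtain ⟨q, hq⟩ := (hdP' x hx y hy).1
    obtain ⟨p, hp⟩ := exists_walk_walkWeight_le_of_forall_adj hunfold q
    exact (walkDist_le_walkWeight hd p).trans (hq ▸ hp)

/-- The shortcut-enhanced subgraph `G⟨P⟩`, obtained from `G[P]` by adding, for every pair
of border vertices of `P`, an edge weighted by their `G`-distance, is distance-preserving:
distances in `G⟨P⟩` equal distances in `G` for all pairs of vertices of `P`. -/
theorem shortcut_enhanced_distance_preserving {V : Type*} [Fintype V]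
    (G G' : SimpleGraph V) (wt wt' : V → V → ℝ)
    (hwpos : ∀ u v, G.Adj u v → 0 < wt u v)
    (hwsymm : ∀ u v, wt u v = wt v u)
    (d dP' : V → V → ℝ)
    (PA PB Vcut : Set V)
    (hpart : ∀ v : V, (v ∈ PA ∧ v ∉ PB ∧ v ∉ Vcut) ∨ (v ∈ PB ∧ v ∉ PA ∧ v ∉ Vcut) ∨
      (v ∈ Vcut ∧ v ∉ PA ∧ v ∉ PB))
    (hsep : ∀ a ∈ PA, ∀ b ∈ PB, ¬ G.Adj a b)
    (P : Set V) (hP : P = PA ∨ P = PB)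
    (B : Set V) (hB : B = {v : V | v ∈ P ∧ ∃ c ∈ Vcut, G.Adj v c})
    (hd : ∀ x y : V, IsLeast {r : ℝ | ∃ p : G.Walk x y, walkWeight wt p = r} (d x y))
    -- the enhanced graph: original edges within `P` plus shortcuts between border vertices
    (hG' : ∀ u v : V, G'.Adj u v ↔ u ≠ v ∧
      ((G.Adj u v ∧ u ∈ P ∧ v ∈ P) ∨ (u ∈ B ∧ v ∈ B)))
    -- shortcut edges carry the `G`-distance as weight; other edges keep their weight
    (hwt'B : ∀ u v : V, u ∈ B → v ∈ B → wt' u v = d u v)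
    (hwt'E : ∀ u v : V, ¬ (u ∈ B ∧ v ∈ B) → wt' u v = wt u v)
    (hdP' : ∀ x ∈ P, ∀ y ∈ P, IsLeast
      {r : ℝ | ∃ p : G'.Walk x y, walkWeight wt' p = r} (dP' x y)) :
    ∀ x ∈ P, ∀ y ∈ P, dP' x y = d x y :=
  shortcut_enhanced_distance_preserving_general G G' wt wt' hwpos d dP' PA PB Vcut hpart hsep P hP B
    hB hd hG' hwt'B hwt'E hdP'
end

section
/- For any vertex cut V_cut of a finite positively-weighted graph G and any vertex v ∉ V_cut, define L*(v) = { u ∈ V_cut : there is no u' ∈ V_cut \ {u} with d_G(u,v) = d_G(u,u') + d_G(u',v) }. Then every labelling L assigning to each v a subset of V_cut such that, for all u ∈ V_cut and v ∉ V_cut, d_G(u,v) = min{ d_G(u,u') + d_G(u',v) : u' ∈ L(v) } (where d_G(u,u) = 0 is allowed, i.e. u itself may be in L(v)) must satisfy L*(v) ⊆ L(v). -/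
theorem cut_cover_subset_valid_labelling_general {V : Type*} (d : V → V → ℝ)
    (Vcut : Finset V) (L : V → Finset V) (hsub : ∀ v, L v ⊆ Vcut)
    (hne : ∀ v, (L v).Nonempty)
    (hvalid : ∀ u ∈ Vcut, ∀ v, v ∉ Vcut →
      d u v = (L v).inf' (hne v) (fun u' => d u u' + d u' v)) :
    ∀ v, v ∉ Vcut → ∀ u ∈ Vcut,
      (¬ ∃ u' ∈ Vcut, u' ≠ u ∧ d u v = d u u' + d u' v) → u ∈ L v := by
  intro v hv u hu hno
  by_contra huL
  obtain ⟨u', hu'L, hmin⟩ := Finset.exists_mem_eq_inf' (hne v) fun u' => d u u' + d u' v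
  refine hno ⟨u', hsub v hu'L, ?_, (hvalid u hu v hv).trans hmin⟩
  rintro rfl
  exact huL hu'L

/-- The cut cover `L*` is contained in every valid labelling: if for every cut vertex `u`
and non-cut vertex `v` the distance `d(u,v)` equals the minimum over `u' ∈ L(v)` of
`d(u,u') + d(u',v)`, then every `u ∈ Vcut` admitting no intermediate cut vertex `u'` on a
shortest `u`–`v` path must belong to `L(v)`. -/
theorem cut_cover_subset_valid_labelling {V : Type*} [DecidableEq V] (d : V → V → ℝ)
    (htri : ∀ a b c : V, d a c ≤ d a b + d b c)
    (hsymm : ∀ a b : V, d a b = d b a)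
    (hrefl : ∀ a : V, d a a = 0)
    (Vcut : Finset V) (L : V → Finset V) (hsub : ∀ v, L v ⊆ Vcut)
    (hne : ∀ v, (L v).Nonempty)
    (hvalid : ∀ u ∈ Vcut, ∀ v, v ∉ Vcut →
      d u v = (L v).inf' (hne v) (fun u' => d u u' + d u' v)) :
    ∀ v, v ∉ Vcut → ∀ u ∈ Vcut,
      (¬ ∃ u' ∈ Vcut, u' ≠ u ∧ d u v = d u u' + d u' v) → u ∈ L v :=
  cut_cover_subset_valid_labelling_general d Vcut L hsub hne hvalid
end

section
/- With tail pruning as defined (a cut vertex v_i is removed from L(u) only if some strictly lower-ranked cut vertex v_j lies on a shortest path between v_i and u, and all higher-ranked cut vertices are also removed), the remaining labels still satisfy: for every u and every v_i ∈ V_cut, d_G(u, v_i) = min{ d_G(u, v_j) + d_G(v_j, v_i) : v_j ∈ L(u) after pruning }. In particular, tail pruning preserves the 2-hop cover property with respect to the cut: for any two vertices s, t separated by V_cut, d_G(s,t) = min{ d_{L(s)}(s,c) + d_{L(t)}(t,c) } can still be computed where each pruned distance is recovered through a retained lower-ranked cut vertex. -/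
/-!
Call `b` *on a geodesic* from `a` to `c` when `d a c = d a b + d b c`. By the triangle
inequality this relation is transitive: if `b` is on a geodesic from `a` to `c` and `e` on one
from `b` to `c`, then `e` is on one from `a` to `c`. A pruned entry `v i` of `L(u)` has a
lower-ranked `v j` on a geodesic from `v i` to `u`; descending in rank, which is well founded,
ends at a retained entry that is still on a geodesic from `v i` to `u`. Going through it costs
nothing, which gives the one-label recovery, and the two-label recovery follows by applying
this on both sides of a cut vertex on a shortest `s`–`t` path.
-/

def OnGeodesic {V : Type*} (d : V → V → ℝ) (a b c : V) : Prop :=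
  d a c = d a b + d b c

namespace OnGeodesic

variable {V : Type*} {d : V → V → ℝ} {a b c e : V}

theorem symm (hsymm : ∀ x y, d x y = d y x) (h : OnGeodesic d a b c) : OnGeodesic d c b a := by
  unfold OnGeodesic at *
  rw [hsymm c a, hsymm c b, hsymm b a]
  linarith

theorem left (hrefl : ∀ x, d x x = 0) (a c : V) : OnGeodesic d a a c := by
  simp [OnGeodesic, hrefl]

theorem trans (htri : ∀ x y z, d x z ≤ d x y + d y z)
    (hab : OnGeodesic d a b c) (hbe : OnGeodesic d b e c) : OnGeodesic d a e c := by
  unfold OnGeodesic at *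
  linarith [htri a e c, htri a b e]

end OnGeodesic

section Pruning

variable {V ι : Type*} [Preorder ι] [WellFoundedLT ι] {d : V → V → ℝ}
  {v : ι → V} {pruned : ι → Prop}

theorem exists_not_pruned_onGeodesic (htri : ∀ x y z, d x z ≤ d x y + d y z)
    (hrefl : ∀ x, d x x = 0) {u : V}
    (hpruned : ∀ i, pruned i → ∃ j < i, OnGeodesic d (v i) (v j) u) (i : ι) :
    ∃ j, ¬ pruned j ∧ OnGeodesic d (v i) (v j) u := by
  induction i using WellFoundedLT.induction with
  | _ i ih =>
    by_cases hi : pruned i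
    · obtain ⟨j, hji, hj⟩ := hpruned i hi
      obtain ⟨k, hk, hjk⟩ := ih j hji
      exact ⟨k, hk, hj.trans htri hjk⟩
    · exact ⟨i, hi, .left hrefl _ _⟩

theorem isLeast_dist_via_not_pruned (htri : ∀ x y z, d x z ≤ d x y + d y z)
    (hrefl : ∀ x, d x x = 0) (hsymm : ∀ x y, d x y = d y x) {s : V}
    (hpruned : ∀ i, pruned i → ∃ j < i, OnGeodesic d (v i) (v j) s) (i : ι) :
    IsLeast {r | ∃ j, ¬ pruned j ∧ r = d s (v j) + d (v j) (v i)} (d s (v i)) := by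
  obtain ⟨j, hj, hgeo⟩ := exists_not_pruned_onGeodesic htri hrefl hpruned i
  refine ⟨⟨j, hj, (hgeo.symm hsymm :)⟩, ?_⟩
  rintro r ⟨k, -, rfl⟩
  exact htri s (v k) (v i)

theorem isLeast_dist_via_not_pruned_pair (htri : ∀ x y z, d x z ≤ d x y + d y z)
    (hrefl : ∀ x, d x x = 0) (hsymm : ∀ x y, d x y = d y x) {s t : V}
    {prunedS prunedT : ι → Prop}
    (hprunedS : ∀ i, prunedS i → ∃ j < i, OnGeodesic d (v i) (v j) s)
    (hprunedT : ∀ i, prunedT i → ∃ j < i, OnGeodesic d (v i) (v j) t)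
    {i : ι} (hi : OnGeodesic d s (v i) t) :
    IsLeast {r | ∃ j k, ¬ prunedS j ∧ ¬ prunedT k ∧
      r = d s (v j) + d (v j) (v k) + d (v k) t} (d s t) := by
  obtain ⟨j, hj, hsj⟩ := exists_not_pruned_onGeodesic htri hrefl hprunedS i
  obtain ⟨k, hk, hkt⟩ := exists_not_pruned_onGeodesic htri hrefl hprunedT i
  have hsj : d s (v i) = d s (v j) + d (v j) (v i) := hsj.symm hsymm
  have hkt : d (v i) t = d (v i) (v k) + d (v k) t := hkt
  refine ⟨⟨j, k, hj, hk, le_antisymm ?_ ?_⟩, ?_⟩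
  · linarith [htri s (v j) (v k), htri s (v k) t]
  · calc d s (v j) + d (v j) (v k) + d (v k) t
        ≤ d s (v j) + d (v j) (v i) + (d (v i) (v k) + d (v k) t) := by
          linarith [htri (v j) (v i) (v k)]
      _ = d s t := by rw [hi, hsj, hkt]
  · rintro r ⟨j', k', -, -, rfl⟩
    linarith [htri s (v j') (v k'), htri s (v k') t]

end Pruning

/-- Tail pruning preserves distance recovery and the 2-hop cover property: every distance
from `s` to a cut vertex `v i` is the minimum, over retained (non-pruned) entries `v j`,
of `d s (v j) + d (v j) (v i)`; and if some cut vertex lies on a shortest `s`–`t` path then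
`d s t` is the minimum over retained entries of both labels of the 3-hop sums. -/
theorem tail_pruning_preserves_cover {V : Type*} (d : V → V → ℝ)
    (htri : ∀ a b c : V, d a c ≤ d a b + d b c)
    (hsymm : ∀ a b : V, d a b = d b a)
    (hrefl : ∀ a : V, d a a = 0)
    (n : ℕ) (v : Fin (n + 1) → V) (s t : V)
    (prunedS prunedT : Fin (n + 1) → Prop)
    (hcharS : ∀ i, prunedS i ↔
      ((∃ j, j < i ∧ d (v i) s = d (v i) (v j) + d (v j) s) ∧ ∀ k, i < k → prunedS k))
    (hcharT : ∀ i, prunedT i ↔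
      ((∃ j, j < i ∧ d (v i) t = d (v i) (v j) + d (v j) t) ∧ ∀ k, i < k → prunedT k)) :
    (∀ i : Fin (n + 1),
      IsLeast {r : ℝ | ∃ j, ¬ prunedS j ∧ r = d s (v j) + d (v j) (v i)} (d s (v i))) ∧
    ((∃ i, d s t = d s (v i) + d (v i) t) →
      IsLeast {r : ℝ | ∃ j k, ¬ prunedS j ∧ ¬ prunedT k ∧
        r = d s (v j) + d (v j) (v k) + d (v k) t} (d s t)) := by
  have hS : ∀ i, prunedS i → ∃ j < i, OnGeodesic d (v i) (v j) s :=
    fun i hi => ((hcharS i).1 hi).1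
  have hT : ∀ i, prunedT i → ∃ j < i, OnGeodesic d (v i) (v j) t :=
    fun i hi => ((hcharT i).1 hi).1
  exact ⟨isLeast_dist_via_not_pruned htri hrefl hsymm hS,
    fun ⟨_, hi⟩ => isLeast_dist_via_not_pruned_pair htri hrefl hsymm hS hT hi⟩
end

section
/- Menger's theorem for vertex cuts via vertex splitting: let G be a finite graph with distinguished non-adjacent vertices S and T, and construct the directed flow network G' where each vertex v ∉ {S,T} is split into v_in and v_out joined by an edge of capacity 1, and each edge (u,v) of G yields edges u_out → v_in and v_out → u_in of infinite capacity. Then the maximum S–T flow value in G' equals the minimum number of vertices (other than S and T) whose removal disconnects S from T in G. -/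
open scoped Classical

/-- Capacities of the vertex-splitting flow network: each vertex `v` is split into an
in-copy `Sum.inl v` and an out-copy `Sum.inr v`, joined by an internal edge of capacity
`1` (capacity `⊤` for `S` and `T`); each edge `(u,v)` of `G` yields edges
`u_out → v_in` (and `v_out → u_in`) of infinite capacity. -/
noncomputable def splitCap {V : Type*} (G : SimpleGraph V) (S T : V) :
    V ⊕ V → V ⊕ V → ℕ∞ :=
  fun x y =>
    match x, y with
    | Sum.inl u, Sum.inr v =>
        if u = v then (if u = S ∨ u = T then ⊤ else 1) else 0
    | Sum.inr u, Sum.inl v => if G.Adj u v then ⊤ else 0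
    | _, _ => 0

/-- A feasible flow in the split network, with source `S_in` and sink `T_out`. -/
def IsSplitFlow {V : Type*} [Fintype V] (G : SimpleGraph V) (S T : V)
    (f : V ⊕ V → V ⊕ V → ℕ) : Prop :=
  (∀ x y, (f x y : ℕ∞) ≤ splitCap G S T x y) ∧
  (∀ x : V ⊕ V, x ≠ Sum.inl S → x ≠ Sum.inr T → ∑ y, f y x = ∑ y, f x y) ∧
  (∀ y, f y (Sum.inl S) = 0) ∧ (∀ y, f (Sum.inr T) y = 0)

/-!
A vertex cut `C` bounds every flow: the in-copies of the vertices that `S` reaches by walks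
meeting `C` at most in their endpoint, together with the out-copies of those among them outside
`C`, form an edge cut left only by the internal arcs of `C` among arcs of positive capacity.
Conversely, a maximum flow has no augmenting path, since pushing one unit along a simple path
of the residual network would increase its value. Hence the set `A` of nodes reachable from
`S_in` in the residual network is an edge cut whose capacity equals the flow value. This capacity
is finite, so no arc of infinite capacity leaves `A`, and therefore the vertices `v` with
`v_in ∈ A`, `v_out ∉ A` form a vertex cut of size at most the flow value.
-/

open Finset

theorem List.exists_isChain_cons_nodup_of_relationReflTransGen {α : Type*} {r : α → α → Prop}
    {a b : α} (h : Relation.ReflTransGen r a b) :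
    ∃ l, IsChain r (a :: l) ∧ (a :: l).Nodup ∧ (a :: l).getLast (cons_ne_nil _ _) = b := by
  refine Relation.ReflTransGen.head_induction_on h ⟨[], .singleton _, nodup_singleton _, rfl⟩ ?_
  rintro a c hac - ⟨l, hchain, hnodup, hlast⟩
  by_cases ha : a ∈ c :: l
  · obtain ⟨p, q, hpq⟩ := append_of_mem ha
    have hsuffix : a :: q <:+ c :: l := hpq ▸ suffix_append p (a :: q)
    refine ⟨q, hchain.suffix hsuffix, hnodup.sublist hsuffix.sublist, ?_⟩
    simpa only [hpq, getLast_append_of_ne_nil _ (cons_ne_nil a q)] using hlast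
  · exact ⟨c :: l, .cons_cons hac hchain, nodup_cons.2 ⟨ha, hnodup⟩, by rwa [getLast_cons_cons]⟩

namespace FlowNetwork

variable {α : Type*}

def Residual (c : α → α → ℕ∞) (f : α → α → ℕ) (x y : α) : Prop :=
  (f x y : ℕ∞) < c x y ∨ 0 < f y x

variable [Fintype α]

structure IsFlow (c : α → α → ℕ∞) (s t : α) (f : α → α → ℕ) : Prop where
  le_cap : ∀ x y, (f x y : ℕ∞) ≤ c x y
  conservation : ∀ x, x ≠ s → x ≠ t → ∑ y, f y x = ∑ y, f x y
  source_in : ∀ y, f y s = 0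
  sink_out : ∀ y, f t y = 0

def netOut (f : α → α → ℕ) (x : α) : ℤ :=
  ∑ y, ((f x y : ℤ) - f y x)

lemma netOut_eq_sub (f : α → α → ℕ) (x : α) :
    netOut f x = ((∑ y, f x y : ℕ) : ℤ) - ((∑ y, f y x : ℕ) : ℤ) := by
  push_cast
  exact sum_sub_distrib ..

lemma netOut_add (f g : α → α → ℕ) (x : α) : netOut (f + g) x = netOut f x + netOut g x := by
  simp only [netOut, ← sum_add_distrib, Pi.add_apply, Nat.cast_add]
  exact sum_congr rfl fun _ _ => by ring

variable {c : α → α → ℕ∞} {s t : α} {f : α → α → ℕ}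

lemma IsFlow.netOut_eq_zero (hf : IsFlow c s t f) {x : α} (hs : x ≠ s) (ht : x ≠ t) :
    netOut f x = 0 := by
  rw [netOut_eq_sub, hf.conservation x hs ht, sub_self]

lemma IsFlow.netOut_source (hf : IsFlow c s t f) : netOut f s = ∑ y, f s y := by
  simp [netOut_eq_sub, hf.source_in]

lemma exists_isMaxFlow (B : ℕ) (hB : ∀ g, IsFlow c s t g → ∑ y, g s y ≤ B) :
    ∃ f, IsFlow c s t f ∧ ∀ g, IsFlow c s t g → ∑ y, g s y ≤ ∑ y, f s y := by
  set values := {n | ∃ g, IsFlow c s t g ∧ ∑ y, g s y = n}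
  have hbdd : BddAbove values := ⟨B, by rintro _ ⟨g, hg, rfl⟩; exact hB g hg⟩
  have hzero : 0 ∈ values := ⟨0, ⟨by simp, by simp, by simp, by simp⟩, by simp⟩
  obtain ⟨f, hf, hfval⟩ := Nat.sSup_mem ⟨0, hzero⟩ hbdd
  exact ⟨f, hf, fun g hg => hfval ▸ le_csSup hbdd ⟨g, hg, rfl⟩⟩

variable [DecidableEq α]

noncomputable def cutCap (c : α → α → ℕ∞) (A : Finset α) : ℕ∞ :=
  ∑ x ∈ A, ∑ y ∈ Aᶜ, c x y

noncomputable def unitEdge (x y : α) : α → α → ℕ :=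
  fun a b => if a = x ∧ b = y then 1 else 0

lemma netOut_unitEdge (x y v : α) :
    netOut (unitEdge x y) v = (if v = x then 1 else 0) - (if v = y then 1 else 0) := by
  simp [netOut, unitEdge, sum_sub_distrib, ite_and]

lemma sum_netOut (f : α → α → ℕ) (A : Finset α) :
    ∑ x ∈ A, netOut f x = ∑ x ∈ A, ∑ y ∈ Aᶜ, ((f x y : ℤ) - f y x) := by
  have hinner : ∑ x ∈ A, ∑ y ∈ A, ((f x y : ℤ) - f y x) = 0 := by
    simp only [sum_sub_distrib]
    rw [sum_comm, sub_self]
  simp only [netOut, ← sum_add_sum_compl A, sum_add_distrib, hinner, zero_add]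

lemma mem_of_cutCap_ne_top {A : Finset α} (hA : cutCap c A ≠ ⊤) {x y : α} (hx : x ∈ A)
    (hxy : c x y = ⊤) : y ∈ A := by
  by_contra hy
  refine hA (top_le_iff.1 ?_)
  calc ⊤ = c x y := hxy.symm
    _ ≤ ∑ y ∈ Aᶜ, c x y := single_le_sum (fun _ _ => zero_le) (mem_compl.2 hy)
    _ ≤ cutCap c A := single_le_sum (f := fun x => ∑ y ∈ Aᶜ, c x y) (fun _ _ => zero_le) hx

lemma exists_push_of_residual (hf : ∀ a b, (f a b : ℕ∞) ≤ c a b) {x y : α}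
    (hxy : Residual c f x y) :
    ∃ g : α → α → ℕ, (∀ a b, (g a b : ℕ∞) ≤ c a b) ∧
      (∀ v, netOut g v = netOut f v + (if v = x then 1 else 0) - (if v = y then 1 else 0)) ∧
      (∀ a b, a ≠ x → b ≠ x → g a b = f a b) ∧
      (∀ a b, f a b < g a b → a = x ∧ b = y) := by
  rcases hxy with hfwd | hbwd
  · refine ⟨f + unitEdge x y, fun a b => ?_, fun v => ?_, fun a b ha _ => ?_, fun a b hab => ?_⟩
    · by_cases h : a = x ∧ b = y
      · obtain ⟨rfl, rfl⟩ := h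
        simpa [unitEdge] using Order.add_one_le_of_lt hfwd
      · simpa [unitEdge, h] using hf a b
    · rw [netOut_add, netOut_unitEdge]
      ring
    · simp [unitEdge, ha]
    · by_contra h
      simp [unitEdge, h] at hab
  · have hcancel : f - unitEdge y x + unitEdge y x = f := by
      ext a b
      by_cases h : a = y ∧ b = x
      · obtain ⟨rfl, rfl⟩ := h
        simpa [unitEdge] using Nat.sub_add_cancel hbwd
      · simp [unitEdge, h]
    refine ⟨f - unitEdge y x, fun a b => le_trans (by simp) (hf a b), fun v => ?_,
      fun a b _ hb => ?_, fun a b hab => absurd hab (by simp)⟩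
    · have h := netOut_add (f - unitEdge y x) (unitEdge y x) v
      rw [hcancel, netOut_unitEdge] at h
      linarith
    · simp [unitEdge, hb]

lemma exists_push_along_residual_chain {l : List α} {x : α}
    (hf : ∀ a b, (f a b : ℕ∞) ≤ c a b) (hchain : (x :: l).IsChain (Residual c f))
    (hnodup : (x :: l).Nodup) (hlast : (x :: l).getLast (List.cons_ne_nil x l) = t) :
    ∃ g : α → α → ℕ, (∀ a b, (g a b : ℕ∞) ≤ c a b) ∧
      (∀ v, netOut g v = netOut f v + (if v = x then 1 else 0) - (if v = t then 1 else 0)) ∧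
      (∀ a b, f a b < g a b → a ≠ t ∧ b ∈ l) := by
  induction l generalizing f x with
  | nil =>
    refine ⟨f, hf, fun v => ?_, fun a b h => absurd h (lt_irrefl _)⟩
    rw [List.getLast_singleton] at hlast
    subst hlast
    ring
  | cons y l ih =>
    rw [List.isChain_cons_cons] at hchain
    obtain ⟨hx, hnodup⟩ := List.nodup_cons.1 hnodup
    obtain ⟨f', hf', hnet', hagree, hincr'⟩ := exists_push_of_residual hf hchain.1
    -- the push only changes arcs at `x`, which the rest of the chain avoids
    have hchain' : (y :: l).IsChain (Residual c f') :=
      hchain.2.imp_of_mem_imp fun a b ha hb hab => by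
        have hax : a ≠ x := fun h => hx (h ▸ ha)
        have hbx : b ≠ x := fun h => hx (h ▸ hb)
        simpa only [Residual, hagree a b hax hbx, hagree b a hbx hax] using hab
    rw [List.getLast_cons_cons] at hlast
    obtain ⟨g, hg, hnet, hincr⟩ := ih hf' hchain' hnodup hlast
    refine ⟨g, hg, fun v => by rw [hnet, hnet']; ring, fun a b hab => ?_⟩
    by_cases h : f' a b < g a b
    · exact (hincr a b h).imp_right (List.mem_cons_of_mem y)
    · obtain ⟨rfl, rfl⟩ := hincr' a b (lt_of_lt_of_le hab (not_lt.1 h))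
      exact ⟨fun hat => hx (hat ▸ hlast ▸ List.getLast_mem _), List.mem_cons_self⟩

lemma IsFlow.exists_value_succ_of_residual_path (hf : IsFlow c s t f) (hst : s ≠ t)
    (hreach : Relation.ReflTransGen (Residual c f) s t) :
    ∃ g, IsFlow c s t g ∧ ∑ y, g s y = ∑ y, f s y + 1 := by
  obtain ⟨l, hchain, hnodup, hlast⟩ :=
    List.exists_isChain_cons_nodup_of_relationReflTransGen hreach
  obtain ⟨g, hcap, hnet, hincr⟩ :=
    exists_push_along_residual_chain hf.le_cap hchain hnodup hlast
  have hg : IsFlow c s t g := by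
    refine ⟨hcap, fun x hxs hxt => ?_, fun y => ?_, fun y => ?_⟩
    · have h := hnet x
      rw [if_neg hxs, if_neg hxt, hf.netOut_eq_zero hxs hxt, netOut_eq_sub] at h
      omega
    · by_contra h
      exact (List.nodup_cons.1 hnodup).1 (hincr y s (by rw [hf.source_in y]; omega)).2
    · by_contra h
      exact (hincr t y (by rw [hf.sink_out y]; omega)).1 rfl
  refine ⟨g, hg, ?_⟩
  have h := hnet s
  rw [if_pos rfl, if_neg hst, hf.netOut_source, hg.netOut_source] at h
  omega

lemma IsFlow.value_eq_sum_cut (hf : IsFlow c s t f) {A : Finset α} (hs : s ∈ A) (ht : t ∉ A) :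
    ((∑ y, f s y : ℕ) : ℤ) = ∑ x ∈ A, ∑ y ∈ Aᶜ, ((f x y : ℤ) - f y x) := by
  rw [← sum_netOut, sum_eq_single_of_mem s hs fun x hx hxs =>
    hf.netOut_eq_zero hxs (ne_of_mem_of_not_mem hx ht), hf.netOut_source]

lemma IsFlow.value_le_cutCap (hf : IsFlow c s t f) {A : Finset α} (hs : s ∈ A) (ht : t ∉ A) :
    ((∑ y, f s y : ℕ) : ℕ∞) ≤ cutCap c A := by
  have hle : ∑ y, f s y ≤ ∑ x ∈ A, ∑ y ∈ Aᶜ, f x y := by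
    have hsub : ∑ x ∈ A, ∑ y ∈ Aᶜ, ((f x y : ℤ) - f y x) ≤ ∑ x ∈ A, ∑ y ∈ Aᶜ, (f x y : ℤ) :=
      sum_le_sum fun x _ => sum_le_sum fun y _ => by simp
    exact_mod_cast (hf.value_eq_sum_cut hs ht).trans_le hsub
  calc ((∑ y, f s y : ℕ) : ℕ∞) ≤ ∑ x ∈ A, ∑ y ∈ Aᶜ, (f x y : ℕ∞) := by exact_mod_cast hle
    _ ≤ cutCap c A := sum_le_sum fun x _ => sum_le_sum fun y _ => hf.le_cap x y

lemma IsFlow.exists_cutCap_eq_value_of_max (hf : IsFlow c s t f)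
    (hmax : ∀ g, IsFlow c s t g → ∑ y, g s y ≤ ∑ y, f s y) (hst : s ≠ t) :
    ∃ A : Finset α, s ∈ A ∧ t ∉ A ∧ cutCap c A = ∑ y, f s y := by
  set A := univ.filter (Relation.ReflTransGen (Residual c f) s)
  have hs : s ∈ A := by simp [A, Relation.ReflTransGen.refl]
  have ht : t ∉ A := fun h => by
    obtain ⟨g, hg, hval⟩ := hf.exists_value_succ_of_residual_path hst (by simpa [A] using h)
    have := hmax g hg
    omega
  have hsat : ∀ x ∈ A, ∀ y ∈ Aᶜ, (f x y : ℕ∞) = c x y ∧ f y x = 0 := by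
    intro x hx y hy
    have hres : ¬ Residual c f x y := fun h =>
      mem_compl.1 hy (by simp only [A, mem_filter, mem_univ, true_and] at hx ⊢; exact hx.tail h)
    simp only [Residual, not_or, not_lt, nonpos_iff_eq_zero] at hres
    exact ⟨le_antisymm (hf.le_cap x y) hres.1, hres.2⟩
  have hval : ((∑ y, f s y : ℕ) : ℤ) = ∑ x ∈ A, ∑ y ∈ Aᶜ, (f x y : ℤ) := by
    rw [hf.value_eq_sum_cut hs ht]
    exact sum_congr rfl fun x hx => sum_congr rfl fun y hy => by simp [(hsat x hx y hy).2]
  have hval' : ∑ y, f s y = ∑ x ∈ A, ∑ y ∈ Aᶜ, f x y := by exact_mod_cast hval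
  refine ⟨A, hs, ht, ?_⟩
  rw [hval', cutCap]
  push_cast
  exact (sum_congr rfl fun x hx => sum_congr rfl fun y hy => (hsat x hx y hy).1).symm

end FlowNetwork

section VertexSplitting

open FlowNetwork

variable {V : Type*} (G : SimpleGraph V) (S T : V)

def IsVertexCut (C : Finset V) : Prop :=
  S ∉ C ∧ T ∉ C ∧ ∀ p : G.Walk S T, ∃ v ∈ p.support, v ∈ C

lemma sum_splitCap_inl_inr {C : Finset V} (hS : S ∉ C) (hT : T ∉ C) :
    ∑ u ∈ C, splitCap G S T (Sum.inl u) (Sum.inr u) = C.card := by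
  rw [card_eq_sum_ones, Nat.cast_sum]
  refine sum_congr rfl fun u hu => ?_
  simp [splitCap, ne_of_mem_of_not_mem hu hS, ne_of_mem_of_not_mem hu hT]

variable [Fintype V]

lemma isSplitFlow_iff {f : V ⊕ V → V ⊕ V → ℕ} :
    IsSplitFlow G S T f ↔ IsFlow (splitCap G S T) (Sum.inl S) (Sum.inr T) f :=
  ⟨fun ⟨h₁, h₂, h₃, h₄⟩ => ⟨h₁, h₂, h₃, h₄⟩, fun h => ⟨h.1, h.2, h.3, h.4⟩⟩

lemma isVertexCut_compl_pair (hST : ¬ G.Adj S T) (hne : S ≠ T) :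
    IsVertexCut G S T {S, T}ᶜ := by
  refine ⟨by simp, by simp, fun p => ?_⟩
  cases p with
  | nil => exact absurd rfl hne
  | cons h q =>
    refine ⟨_, List.mem_cons_of_mem _ q.start_mem_support, ?_⟩
    simp only [mem_compl, mem_insert, mem_singleton, not_or]
    exact ⟨h.ne', fun hv => hST (hv ▸ h)⟩

lemma IsVertexCut.exists_cutCap_le_card {C : Finset V} (hC : IsVertexCut G S T C) :
    ∃ A : Finset (V ⊕ V), Sum.inl S ∈ A ∧ Sum.inr T ∉ A ∧
      cutCap (splitCap G S T) A ≤ C.card := by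
  set R : V → Prop := fun v => ∃ p : G.Walk S v, ∀ u ∈ p.support, u ∈ C → u = v
  have hRS : R S := ⟨.nil, fun u hu _ => by simpa using hu⟩
  have hRT : ¬ R T := fun ⟨p, hp⟩ => by
    obtain ⟨v, hv, hvC⟩ := hC.2.2 p
    exact hC.2.1 (hp v hv hvC ▸ hvC)
  have hRadj : ∀ {u v}, R u → u ∉ C → G.Adj u v → R v := by
    rintro u v ⟨p, hp⟩ hu huv
    refine ⟨p.concat huv, fun w hw hwC => ?_⟩
    rw [SimpleGraph.Walk.support_concat, List.mem_append, List.mem_singleton] at hw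
    exact hw.resolve_left fun hw => hu (hp w hw hwC ▸ hwC)
  set A : Finset (V ⊕ V) := univ.filter (Sum.elim R fun v => R v ∧ v ∉ C)
  have hsupp : ∀ p ∈ A ×ˢ Aᶜ, splitCap G S T p.1 p.2 ≠ 0 →
      p ∈ C.image fun u => (Sum.inl u, Sum.inr u) := by
    rintro ⟨x | x, y | y⟩ hp hne <;>
      simp only [A, mem_product, mem_compl, mem_filter, mem_univ, true_and, Sum.elim_inl,
        Sum.elim_inr] at hp
    · exact absurd rfl hne
    · obtain rfl : x = y := by
        by_contra h
        simp [splitCap, h] at hne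
      exact mem_image.2 ⟨x, by tauto, rfl⟩
    · have hadj : G.Adj x y := by
        by_contra h
        simp [splitCap, h] at hne
      exact absurd (hRadj hp.1.1 hp.1.2 hadj) hp.2
    · exact absurd rfl hne
  refine ⟨A, by simpa [A] using hRS, by simp [A, hRT], ?_⟩
  calc cutCap (splitCap G S T) A = ∑ p ∈ A ×ˢ Aᶜ, splitCap G S T p.1 p.2 := by
        rw [cutCap, sum_product']
    _ ≤ ∑ p ∈ C.image fun u => (Sum.inl u, Sum.inr u), splitCap G S T p.1 p.2 :=
        sum_le_sum_of_ne_zero hsupp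
    _ = C.card := by rw [sum_image (by simp), sum_splitCap_inl_inr G S T hC.1 hC.2.1]

lemma exists_isVertexCut_card_le {A : Finset (V ⊕ V)} (hS : Sum.inl S ∈ A)
    (hT : Sum.inr T ∉ A) (hA : cutCap (splitCap G S T) A ≠ ⊤) :
    ∃ C : Finset V, IsVertexCut G S T C ∧ (C.card : ℕ∞) ≤ cutCap (splitCap G S T) A := by
  have hclosed : ∀ {x y}, x ∈ A → splitCap G S T x y = ⊤ → y ∈ A :=
    fun hx hxy => mem_of_cutCap_ne_top hA hx hxy
  have hS' : Sum.inr S ∈ A := hclosed hS (by simp [splitCap])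
  have hT' : Sum.inl T ∉ A := fun h => hT (hclosed h (by simp [splitCap]))
  set C := univ.filter fun v => Sum.inl v ∈ A ∧ Sum.inr v ∉ A
  have hSC : S ∉ C := by simp [C, hS']
  have hTC : T ∉ C := by simp [C, hT']
  refine ⟨C, ⟨hSC, hTC, fun p => ?_⟩, ?_⟩
  · obtain ⟨d, hd, hdA, hdA'⟩ := p.exists_boundary_dart {v | Sum.inl v ∈ A} hS hT'
    refine ⟨d.fst, p.dart_fst_mem_support_of_mem_darts hd, ?_⟩
    simp only [C, mem_filter, mem_univ, true_and]
    exact ⟨hdA, fun h => hdA' (hclosed h (by simp [splitCap, d.adj]))⟩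
  calc (C.card : ℕ∞) = ∑ u ∈ C, splitCap G S T (Sum.inl u) (Sum.inr u) :=
        (sum_splitCap_inl_inr G S T hSC hTC).symm
    _ = ∑ p ∈ C.image fun u => (Sum.inl u, Sum.inr u), splitCap G S T p.1 p.2 := by
        rw [sum_image (by simp)]
    _ ≤ ∑ p ∈ A ×ˢ Aᶜ, splitCap G S T p.1 p.2 := by
        refine sum_le_sum_of_subset fun p hp => ?_
        obtain ⟨u, hu, rfl⟩ := mem_image.1 hp
        simpa [C] using hu
    _ = cutCap (splitCap G S T) A := by rw [cutCap, sum_product']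

lemma IsSplitFlow.value_le_card {f : V ⊕ V → V ⊕ V → ℕ} (hf : IsSplitFlow G S T f)
    {C : Finset V} (hC : IsVertexCut G S T C) : ∑ y, f (Sum.inl S) y ≤ C.card := by
  obtain ⟨A, hSA, hTA, hA⟩ := hC.exists_cutCap_le_card
  exact_mod_cast (((isSplitFlow_iff G S T).1 hf).value_le_cutCap hSA hTA).trans hA

end VertexSplitting

theorem menger_vertex_splitting_general {V : Type*} [Fintype V]
    (G : SimpleGraph V) (S T : V) (hST : ¬ G.Adj S T) (hne : S ≠ T) :
    ∃ m : ℕ,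
      IsGreatest {n : ℕ | ∃ f : V ⊕ V → V ⊕ V → ℕ,
        IsSplitFlow G S T f ∧ ∑ y, f (Sum.inl S) y = n} m ∧
      IsLeast {n : ℕ | ∃ C : Finset V, S ∉ C ∧ T ∉ C ∧
        (∀ p : G.Walk S T, ∃ v ∈ p.support, v ∈ C) ∧ C.card = n} m := by
  obtain ⟨f, hf, hmax⟩ := FlowNetwork.exists_isMaxFlow _ fun g hg =>
    ((isSplitFlow_iff G S T).2 hg).value_le_card G S T (isVertexCut_compl_pair G S T hST hne)
  obtain ⟨A, hSA, hTA, hcap⟩ := hf.exists_cutCap_eq_value_of_max hmax Sum.inl_ne_inr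
  obtain ⟨C, hC, hCcard⟩ :=
    exists_isVertexCut_card_le G S T hSA hTA (hcap ▸ ENat.natCast_ne_top _)
  have hf' : IsSplitFlow G S T f := (isSplitFlow_iff G S T).2 hf
  refine ⟨_, ⟨⟨f, hf', rfl⟩, ?_⟩, ⟨C, hC.1, hC.2.1, hC.2.2, le_antisymm ?_ ?_⟩, ?_⟩
  · rintro _ ⟨g, hg, rfl⟩
    exact hmax g ((isSplitFlow_iff G S T).1 hg)
  · exact_mod_cast hcap ▸ hCcard
  · exact hf'.value_le_card G S T hC
  · rintro _ ⟨C', hS, hT, hcut, rfl⟩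
    exact hf'.value_le_card G S T ⟨hS, hT, hcut⟩

/-- Menger's theorem for vertex cuts via vertex splitting: for non-adjacent `S, T` in a
finite graph `G`, the maximum `S`–`T` flow value in the split network equals the minimum
number of vertices (other than `S` and `T`) whose removal disconnects `S` from `T`. -/
theorem menger_vertex_splitting {V : Type*} [Fintype V] [DecidableEq V]
    (G : SimpleGraph V) (S T : V) (hST : ¬ G.Adj S T) (hne : S ≠ T) :
    ∃ m : ℕ,
      IsGreatest {n : ℕ | ∃ f : V ⊕ V → V ⊕ V → ℕ,
        IsSplitFlow G S T f ∧ ∑ y, f (Sum.inl S) y = n} m ∧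
      IsLeast {n : ℕ | ∃ C : Finset V, S ∉ C ∧ T ∉ C ∧
        (∀ p : G.Walk S T, ∃ v ∈ p.support, v ∈ C) ∧ C.card = n} m :=
  menger_vertex_splitting_general G S T hST hne
end
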